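/- arXiv:1203.4688 — 4 statements merged into one kernel-verified Lean document; each statement's English description precedes it below -/
import Mathlib

section
/- If U and V are m-dimensional linear subspaces of R^n with orthonormal bases (e_1,...,e_m) and (f_1,...,f_m) respectively such that |e_i - f_i| ≤ ϑ for all i, then the distance of orthogonal projections satisfies ‖π_U − π_V‖ ≤ 2mϑ. -/
open MeasureTheory Metric Set
open scoped ENNReal

noncomputable section

/-- Euclidean space ℝⁿ. -/
abbrev E (n : ℕ) := EuclideanSpace ℝ (Fin n)

/-- The orthogonal projection of ℝⁿ onto a linear subspace `U`, as a map ℝⁿ → ℝⁿ. -/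
noncomputable def proj {n : ℕ} (U : Submodule ℝ (E n)) : E n →L[ℝ] E n :=
  U.subtypeL.comp (U.orthogonalProjection)

/-! The projection onto the span of an orthonormal family `e` is `∑ i, ⟪e i, ·⟫ • e i`, and each
rank-one summand moves by at most `2 ‖e i - f i‖` when `e i` is replaced by `f i`, since
`⟪e, ·⟫ • e - ⟪f, ·⟫ • f = ⟪e - f, ·⟫ • e + ⟪f, ·⟫ • (e - f)`. Summing over the `m` basis
vectors gives the bound `2 m ϑ`. -/

open InnerProductSpace

theorem proj_eq_starProjection {n : ℕ} (U : Submodule ℝ (E n)) : proj U = U.starProjection := rfl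

section

variable {𝕜 F ι : Type*} [RCLike 𝕜] [NormedAddCommGroup F] [InnerProductSpace 𝕜 F]

theorem Orthonormal.starProjection_eq_sum_rankOne [Fintype ι] {e : ι → F} (he : Orthonormal 𝕜 e)
    {U : Submodule 𝕜 F} [U.HasOrthogonalProjection] (hU : Submodule.span 𝕜 (Set.range e) = U) :
    U.starProjection = ∑ i, rankOne 𝕜 (e i) (e i) := by
  subst hU
  let b := Module.Basis.span he.linearIndependent
  have hb : Orthonormal 𝕜 b :=
    funext (Module.Basis.span_apply he.linearIndependent) ▸ orthonormal_span he
  simpa [b] using (b.toOrthonormalBasis hb).starProjection_eq_sum_rankOne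

theorem norm_rankOne_self_sub_rankOne_self_le (u v : F) :
    ‖rankOne 𝕜 u u - rankOne 𝕜 v v‖ ≤ (‖u‖ + ‖v‖) * ‖u - v‖ := by
  have hsplit : rankOne 𝕜 u u - rankOne 𝕜 v v = rankOne 𝕜 (u - v) u + rankOne 𝕜 v (u - v) := by
    simp only [map_sub, sub_apply]; abel
  calc ‖rankOne 𝕜 u u - rankOne 𝕜 v v‖
      ≤ ‖rankOne 𝕜 (u - v) u‖ + ‖rankOne 𝕜 v (u - v)‖ := hsplit ▸ norm_add_le _ _
    _ = (‖u‖ + ‖v‖) * ‖u - v‖ := by simp only [norm_rankOne]; ring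

end

/-- If `U` and `V` are `m`-dimensional subspaces of ℝⁿ with orthonormal bases
`e` and `f` such that `‖e i - f i‖ ≤ ϑ` for all `i`, then `‖π_U - π_V‖ ≤ 2 m ϑ`. -/
theorem grassmann_close_bases (n m : ℕ) (ϑ : ℝ)
    (U V : Submodule ℝ (E n)) (e f : Fin m → E n)
    (he : Orthonormal ℝ e) (hf : Orthonormal ℝ f)
    (heU : Submodule.span ℝ (Set.range e) = U)
    (hfV : Submodule.span ℝ (Set.range f) = V)
    (hef : ∀ i, ‖e i - f i‖ ≤ ϑ) :
    ‖proj U - proj V‖ ≤ 2 * m * ϑ := by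
  rw [proj_eq_starProjection, proj_eq_starProjection, he.starProjection_eq_sum_rankOne heU,
    hf.starProjection_eq_sum_rankOne hfV, ← Finset.sum_sub_distrib]
  calc ‖∑ i, (rankOne ℝ (e i) (e i) - rankOne ℝ (f i) (f i))‖
      ≤ ∑ i, ‖rankOne ℝ (e i) (e i) - rankOne ℝ (f i) (f i)‖ := norm_sum_le _ _
    _ ≤ ∑ _i : Fin m, 2 * ϑ := Finset.sum_le_sum fun i _ => by
        have := norm_rankOne_self_sub_rankOne_self_le (𝕜 := ℝ) (e i) (f i)
        rw [he.1 i, hf.1 i] at this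
        linarith [hef i]
    _ = 2 * m * ϑ := by simp; ring

end
end

section
/- Let ρ > 0, ε ∈ (0,1/2), δ ∈ (0,1), and let (v_1,...,v_m) be a basis of an m-dimensional subspace V of R^n satisfying (1−ε)ρ ≤ |v_i| ≤ (1+ε)ρ for all i and |⟨v_i, v_j⟩| ≤ δρ² for i ≠ j. Then there exists a constant C₂ depending only on m and an orthogonal basis (v̂_1,...,v̂_m) of V with |v̂_i| = ρ for all i and ⟨v̂_i, v̂_j⟩ = 0 for i ≠ j, such that |v_i − v̂_i| ≤ (ε + C₂δ)ρ for all i. -/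
open MeasureTheory Metric Set
open scoped ENNReal

noncomputable section

/-!
Take `v̂ i = ρ • gramSchmidtNormed ℝ v i`. The Gram–Schmidt vector `u i` differs from `v i` by the
projections of `v i` onto the earlier `u j`; since `u j` is close to `v j`, which is almost
orthogonal to `v i`, each projection is `O(δρ + ‖u j - v j‖)`, and induction gives
`‖u i - v i‖ ≤ (9 ^ i - 1) δ ρ` as long as `4 · 9 ^ m · δ ≤ 1`. Rescaling `u i` to length `ρ` moves it
by at most `‖u i - v i‖ + |‖v i‖ - ρ|`, whence `C₂ = 8 · 9 ^ m`. For larger `δ` the trivial bound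
`‖v i - v̂ i‖ ≤ (2 + ε) ρ` already suffices.
-/

open InnerProductSpace

theorem Fin.sum_Iio_comp_val {M : Type*} [AddCommMonoid M] {m : ℕ} (f : ℕ → M) (i : Fin m) :
    ∑ j ∈ Finset.Iio i, f j = ∑ k ∈ Finset.range i, f k := by
  rw [← Nat.Iio_eq_range, ← Fin.map_valEmbedding_Iio, Finset.sum_map]
  rfl

theorem norm_mul_norm_starProjection_singleton {𝕜 F : Type*} [RCLike 𝕜] [NormedAddCommGroup F]
    [InnerProductSpace 𝕜 F] (u y : F) :
    ‖u‖ * ‖(𝕜 ∙ u).starProjection y‖ = ‖(inner 𝕜 u y : 𝕜)‖ := by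
  rcases eq_or_ne u 0 with rfl | hu
  · simp
  have h := congrArg norm (Submodule.smul_starProjection_singleton 𝕜 (v := u) y)
  rw [norm_smul, norm_smul, RCLike.norm_ofReal, abs_of_nonneg (by positivity)] at h
  refine mul_right_cancel₀ (norm_ne_zero_iff.2 hu) ?_
  rw [← h]
  ring

section Real

variable {F : Type*} [NormedAddCommGroup F] [InnerProductSpace ℝ F]

theorem norm_starProjection_singleton_le {ρ δ : ℝ} {u x y : F} (hρ : 0 < ρ)
    (hx : ρ / 2 ≤ ‖x‖) (hy : ‖y‖ ≤ 2 * ρ) (hxy : |⟪x, y⟫_ℝ| ≤ δ * ρ ^ 2)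
    (hux : ‖u - x‖ ≤ ρ / 4) :
    ‖(ℝ ∙ u).starProjection y‖ ≤ 4 * δ * ρ + 8 * ‖u - x‖ := by
  have hu : ρ / 4 ≤ ‖u‖ := by
    have := norm_sub_norm_le x u
    rw [norm_sub_rev] at this
    linarith
  have huy : |⟪u, y⟫_ℝ| ≤ δ * ρ ^ 2 + ‖u - x‖ * (2 * ρ) := by
    rw [show ⟪u, y⟫_ℝ = ⟪x, y⟫_ℝ + ⟪u - x, y⟫_ℝ by rw [inner_sub_left]; ring]
    exact (abs_add_le _ _).trans (add_le_add hxy <| (abs_real_inner_le_norm _ _).trans <|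
      mul_le_mul_of_nonneg_left hy (norm_nonneg _))
  have key := norm_mul_norm_starProjection_singleton (𝕜 := ℝ) u y
  rw [Real.norm_eq_abs] at key
  refine le_of_mul_le_mul_left ?_ (by positivity : 0 < ρ / 4)
  calc ρ / 4 * ‖(ℝ ∙ u).starProjection y‖ ≤ ‖u‖ * ‖(ℝ ∙ u).starProjection y‖ := by gcongr
    _ ≤ ρ / 4 * (4 * δ * ρ + 8 * ‖u - x‖) := by rw [key]; linarith

theorem norm_gramSchmidt_sub_le {m : ℕ} {v : Fin m → F} {ρ δ : ℝ} (hρ : 0 < ρ) (hδ : 0 ≤ δ)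
    (hsmall : 4 * 9 ^ m * δ ≤ 1) (hlo : ∀ i, ρ / 2 ≤ ‖v i‖) (hhi : ∀ i, ‖v i‖ ≤ 2 * ρ)
    (hinner : ∀ i j, i ≠ j → |⟪v i, v j⟫_ℝ| ≤ δ * ρ ^ 2) (i : Fin m) :
    ‖gramSchmidt ℝ v i - v i‖ ≤ (9 ^ (i : ℕ) - 1) * δ * ρ := by
  induction i using WellFoundedLT.induction with
  | _ i ih =>
    have hterm : ∀ j ∈ Finset.Iio i,
        ‖(ℝ ∙ gramSchmidt ℝ v j).starProjection (v i)‖ ≤ 8 * 9 ^ (j : ℕ) * δ * ρ := by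
      intro j hj
      have hji := Finset.mem_Iio.1 hj
      have hpow : (9 : ℝ) ^ (j : ℕ) ≤ 9 ^ m := pow_le_pow_right₀ (by norm_num) j.2.le
      have hcoeff : (9 ^ (j : ℕ) - 1) * δ ≤ 1 / 4 := by nlinarith
      have hclose := ih j hji
      refine (norm_starProjection_singleton_le hρ (hlo j) (hhi i) (hinner j i hji.ne)
        (hclose.trans ?_)).trans ?_
      · nlinarith
      · nlinarith [mul_nonneg hδ hρ.le]
    calc ‖gramSchmidt ℝ v i - v i‖
        = ‖∑ j ∈ Finset.Iio i, (ℝ ∙ gramSchmidt ℝ v j).starProjection (v i)‖ := by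
          rw [gramSchmidt_def ℝ v i, sub_sub_cancel_left, norm_neg]
      _ ≤ ∑ j ∈ Finset.Iio i, 8 * 9 ^ (j : ℕ) * δ * ρ := norm_sum_le_of_le _ hterm
      _ = (9 ^ (i : ℕ) - 1) * δ * ρ := by
          rw [← Finset.sum_mul, ← Finset.sum_mul, ← Finset.mul_sum,
            Fin.sum_Iio_comp_val (fun k => (9 : ℝ) ^ k), ← geom_sum_mul]
          ring

theorem norm_sub_smul_inv_norm_smul_le (x u : F) (ρ : ℝ) :
    ‖x - ρ • ‖u‖⁻¹ • u‖ ≤ 2 * ‖u - x‖ + |‖x‖ - ρ| := by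
  rcases eq_or_ne u 0 with rfl | hu
  · simp only [norm_zero, inv_zero, smul_zero, sub_zero, zero_sub, norm_neg]
    linarith [norm_nonneg x, abs_nonneg (‖x‖ - ρ)]
  have hnormalize : ‖u - ρ • ‖u‖⁻¹ • u‖ = |‖u‖ - ρ| := by
    have hu' : ‖u‖ ≠ 0 := norm_ne_zero_iff.2 hu
    have hfactor : u - (ρ * ‖u‖⁻¹) • u = (1 - ρ * ‖u‖⁻¹) • u := by rw [sub_smul, one_smul]
    rw [smul_smul, hfactor, norm_smul, Real.norm_eq_abs,
      show ‖u‖ - ρ = (1 - ρ * ‖u‖⁻¹) * ‖u‖ by field_simp, abs_mul, abs_norm]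
  calc ‖x - ρ • ‖u‖⁻¹ • u‖ = ‖(x - u) + (u - ρ • ‖u‖⁻¹ • u)‖ := by rw [sub_add_sub_cancel]
    _ ≤ ‖u - x‖ + |‖u‖ - ρ| := by
        rw [← hnormalize, norm_sub_rev u x]; exact norm_add_le _ _
    _ ≤ 2 * ‖u - x‖ + |‖x‖ - ρ| := by
        have := abs_norm_sub_norm_le u x
        have := abs_sub_le ‖u‖ ‖x‖ ρ
        linarith

theorem norm_sub_smul_gramSchmidtNormed_le {m : ℕ} {v : Fin m → F} {ρ ε δ : ℝ} (hρ : 0 < ρ)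
    (hε : ε < 1 / 2) (hδ : 0 ≤ δ) (hv : LinearIndependent ℝ v)
    (hnorm : ∀ i, (1 - ε) * ρ ≤ ‖v i‖ ∧ ‖v i‖ ≤ (1 + ε) * ρ)
    (hinner : ∀ i j, i ≠ j → |⟪v i, v j⟫_ℝ| ≤ δ * ρ ^ 2) (i : Fin m) :
    ‖v i - ρ • gramSchmidtNormed ℝ v i‖ ≤ (ε + 8 * 9 ^ m * δ) * ρ := by
  rcases le_or_gt (4 * 9 ^ m * δ) 1 with hsmall | hlarge
  · have hερ := mul_lt_mul_of_pos_right hε hρ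
    have hclose := norm_gramSchmidt_sub_le hρ hδ hsmall
      (fun j => by linarith [(hnorm j).1]) (fun j => by linarith [(hnorm j).2]) hinner i
    have hpow : (9 : ℝ) ^ (i : ℕ) ≤ 9 ^ m := pow_le_pow_right₀ (by norm_num) i.2.le
    have hdev : |‖v i‖ - ρ| ≤ ε * ρ :=
      abs_le.2 ⟨by linarith [(hnorm i).1], by linarith [(hnorm i).2]⟩
    calc ‖v i - ρ • gramSchmidtNormed ℝ v i‖
        ≤ 2 * ‖gramSchmidt ℝ v i - v i‖ + |‖v i‖ - ρ| := norm_sub_smul_inv_norm_smul_le _ _ _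
      _ ≤ (ε + 8 * 9 ^ m * δ) * ρ := by
          have hδρ := mul_nonneg hδ hρ.le
          nlinarith [mul_le_mul_of_nonneg_right hpow hδρ,
            mul_nonneg (pow_nonneg (by norm_num : (0 : ℝ) ≤ 9) m) hδρ]
  · calc ‖v i - ρ • gramSchmidtNormed ℝ v i‖ ≤ ‖v i‖ + ‖ρ • gramSchmidtNormed ℝ v i‖ :=
          norm_sub_le _ _
      _ ≤ (1 + ε) * ρ + ρ := by
          rw [norm_smul, gramSchmidtNormed_unit_length i hv, Real.norm_of_nonneg hρ.le, mul_one]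
          linarith [(hnorm i).2]
      _ ≤ (ε + 8 * 9 ^ m * δ) * ρ := by nlinarith

end Real

/-- Gram–Schmidt type reduction for `(ρ,ε,δ)`-bases: for every `m` there is a constant
`C₂ = C₂(m)` such that for every `(ρ,ε,δ)`-basis `v` of an `m`-dimensional subspace
`V ⊂ ℝⁿ` (with `ε ∈ (0,1/2)`, `δ ∈ (0,1)`) there is an ortho-`ρ`-normal basis `v̂` of `V`
with `‖v i − v̂ i‖ ≤ (ε + C₂ δ) ρ` for all `i`. -/
theorem gram_schmidt_reduction (m : ℕ) :
    ∃ C₂ : ℝ, 0 < C₂ ∧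
      ∀ (n : ℕ) (ρ ε δ : ℝ), 0 < ρ → ε ∈ Set.Ioo (0:ℝ) (1/2) → δ ∈ Set.Ioo (0:ℝ) 1 →
        ∀ (V : Submodule ℝ (E n)) (v : Fin m → E n),
          LinearIndependent ℝ v →
          Submodule.span ℝ (Set.range v) = V →
          (∀ i, (1 - ε) * ρ ≤ ‖v i‖ ∧ ‖v i‖ ≤ (1 + ε) * ρ) →
          (∀ i j, i ≠ j → |(inner ℝ (v i) (v j) : ℝ)| ≤ δ * ρ ^ 2) →
          ∃ vh : Fin m → E n,
            (∀ i, ‖vh i‖ = ρ) ∧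
            (∀ i j, i ≠ j → (inner ℝ (vh i) (vh j) : ℝ) = 0) ∧
            Submodule.span ℝ (Set.range vh) = V ∧
            ∀ i, ‖v i - vh i‖ ≤ (ε + C₂ * δ) * ρ := by
  refine ⟨8 * 9 ^ m, by positivity, fun n ρ ε δ hρ hε hδ V v hv hspan hnorm hinner => ?_⟩
  refine ⟨fun i => ρ • gramSchmidtNormed ℝ v i, fun i => ?_, fun i j hij => ?_, ?_,
    norm_sub_smul_gramSchmidtNormed_le hρ hε.2 hδ.1.le hv hnorm hinner⟩
  · rw [norm_smul, gramSchmidtNormed_unit_length i hv, Real.norm_of_nonneg hρ.le, mul_one]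
  · rw [real_inner_smul_left, real_inner_smul_right, (gramSchmidtNormed_orthonormal hv).2 hij,
      mul_zero, mul_zero]
  · rw [Set.range_smul, Submodule.span_smul_eq_of_isUnit _ _ (Ne.isUnit hρ.ne'),
      span_gramSchmidtNormed_range, span_gramSchmidt, hspan]

end
end

section
/- Let T = conv(x_0,...,x_{m+1}) be an (m+1)-simplex in R^n with diam(T) ≤ d and h_min(T) ≥ ηd for some η ∈ [0,1] and d > 0. If x̄_0 ∈ R^n satisfies |x_0 − x̄_0| ≤ (η²/8)d, then the simplex T̄ = conv(x̄_0, x_1,...,x_{m+1}) satisfies diam(T̄) ≤ (9/8)d and h_min(T̄) ≥ (1/2)ηd. -/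
open MeasureTheory Metric Set
open scoped ENNReal

noncomputable section

/-- The `j`-th height of the simplex with vertices `x 0, …, x (m+1)`. -/
noncomputable def height {n m : ℕ} (x : Fin (m+2) → E n) (j : Fin (m+2)) : ℝ :=
  Metric.infDist (x j) (affineSpan ℝ (x '' {i | i ≠ j}) : Set (E n))

/-- The minimal height of the simplex with vertices `x 0, …, x (m+1)`. -/
noncomputable def minHeight {n m : ℕ} (x : Fin (m+2) → E n) : ℝ := ⨅ j, height x j

/-!
Moving `x 0` by `ε = η²d/8` changes every edge by at most `ε`, and leaves the face opposite
`x 0` unchanged, so that height drops by at most `ε`. For `j ≠ 0`, a point `r • (x̄₀ - x k) + q`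
(`q` in the span `B` of the vertices other than `x 0`, `x j`) of the new face opposite `x j` is
within `|r| ε` of the old face when `|r| ≤ 4/η`; when `|r| > 4/η` it lies at distance at least
`|r| (ηd - ε)` from `x k`, because `x̄₀` is still `ηd - ε` away from `B`, hence at least
`4(ηd - ε)/η - d` from `x j`. Both bounds are at least `ηd/2`.
-/

section AffineSpan

variable {V : Type*} [NormedAddCommGroup V] [NormedSpace ℝ V]

theorem dist_smul_sub_add_smul_sub_add (r : ℝ) (p p' a q : V) :
    dist (r • (p' - a) + q) (r • (p - a) + q) = |r| * dist p' p := by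
  rw [dist_add_right, dist_smul₀, dist_sub_right, Real.norm_eq_abs]

theorem exists_dist_smul_sub_add_eq {B : AffineSubspace ℝ V} {a q : V} (ha : a ∈ B) (hq : q ∈ B)
    {r : ℝ} (hr : r ≠ 0) (p : V) :
    ∃ w ∈ B, dist (r • (p - a) + q) a = |r| * dist p w := by
  refine ⟨r⁻¹ • (a -ᵥ q) +ᵥ a, B.smul_vsub_vadd_mem _ ha hq ha, ?_⟩
  rw [← Real.norm_eq_abs, ← dist_smul₀, vsub_eq_sub, vadd_eq_add, smul_add, smul_smul,
    mul_inv_cancel₀ hr, one_smul, dist_eq_norm, dist_eq_norm]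
  congr 1
  module

theorem min_le_dist_of_mem_affineSpan_insert {S : Set V} {z p p' y : V} {h ε D c : ℝ}
    (hz : ∀ y ∈ affineSpan ℝ (insert p S), h ≤ dist z y)
    (hp : ∀ b ∈ affineSpan ℝ S, h ≤ dist p b) (hpp' : dist p p' ≤ ε)
    (hD : ∀ s ∈ S, dist z s ≤ D) (hc : 1 ≤ c) (hy : y ∈ affineSpan ℝ (insert p' S)) :
    min (h - c * ε) (c * (h - ε) - D) ≤ dist z y := by
  rcases S.eq_empty_or_nonempty with rfl | ⟨a, ha⟩
  · rw [insert_empty_eq, AffineSubspace.mem_affineSpan_singleton] at hy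
    subst hy
    have hzp := hz p (mem_affineSpan ℝ (mem_insert p ∅))
    have : ε ≤ c * ε := le_mul_of_one_le_left (dist_nonneg.trans hpp') hc
    have := dist_triangle z y p
    rw [dist_comm y p] at this
    refine (min_le_left _ _).trans ?_
    linarith
  have haB : a ∈ affineSpan ℝ S := subset_affineSpan ℝ S ha
  rw [← affineSpan_insert_affineSpan, AffineSubspace.mem_affineSpan_insert_iff haB] at hy
  obtain ⟨r, q, hq, rfl⟩ := hy
  rw [vsub_eq_sub, vadd_eq_add]
  by_cases hr : |r| ≤ c
  · have hmem : r • (p - a) + q ∈ affineSpan ℝ (insert p S) := by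
      rw [← affineSpan_insert_affineSpan]
      exact (AffineSubspace.mem_affineSpan_insert_iff haB _ _).2 ⟨r, q, hq, rfl⟩
    calc min (h - c * ε) (c * (h - ε) - D) ≤ h - c * ε := min_le_left _ _
      _ ≤ dist z (r • (p - a) + q) - |r| * dist p' p := by
          have := hz _ hmem
          have : |r| * dist p' p ≤ c * ε :=
            mul_le_mul hr (dist_comm p' p ▸ hpp') dist_nonneg (by linarith)
          linarith
      _ ≤ dist z (r • (p' - a) + q) := by
          rw [← dist_smul_sub_add_smul_sub_add r p p' a q, sub_le_iff_le_add]
          exact dist_triangle _ _ _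
  · have hr0 : r ≠ 0 := by rintro rfl; rw [abs_zero] at hr; linarith
    obtain ⟨w, hw, hdist⟩ := exists_dist_smul_sub_add_eq haB hq hr0 p'
    calc min (h - c * ε) (c * (h - ε) - D) ≤ c * (h - ε) - D := min_le_right _ _
      _ ≤ |r| * dist p' w - dist z a := by
          have := hp w hw
          have := dist_triangle p p' w
          have : c * (h - ε) ≤ c * dist p' w :=
            mul_le_mul_of_nonneg_left (by linarith) (by linarith)
          have : c * dist p' w ≤ |r| * dist p' w :=
            mul_le_mul_of_nonneg_right (by linarith) dist_nonneg
          linarith [hD a ha]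
      _ ≤ dist z (r • (p' - a) + q) := by
          rw [← hdist, sub_le_iff_le_add, dist_comm z]
          exact dist_triangle _ _ _

end AffineSpan

theorem range_update_subset_union {ι α : Type*} [DecidableEq ι] (x : ι → α) (i : ι) (p : α) :
    range (Function.update x i p) ⊆ range x ∪ {p} := by
  rintro _ ⟨k, rfl⟩
  rcases eq_or_ne k i with rfl | hk
  · simp
  · simp [Function.update_of_ne hk]

theorem diam_range_update_le {ι α : Type*} [Finite ι] [DecidableEq ι] [PseudoMetricSpace α]
    (x : ι → α) (i : ι) (p : α) :
    diam (range (Function.update x i p)) ≤ diam (range x) + dist (x i) p :=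
  calc diam (range (Function.update x i p)) ≤ diam (range x ∪ {p}) :=
        diam_mono (range_update_subset_union x i p)
          ((finite_range x).union (finite_singleton p)).isBounded
    _ ≤ diam (range x) + dist (x i) p + diam {p} :=
        diam_union (mem_range_self i) (mem_singleton p)
    _ = diam (range x) + dist (x i) p := by rw [diam_singleton, add_zero]

theorem image_update_setOf_ne {ι α : Type*} [DecidableEq ι] (x : ι → α) {i j : ι} (hji : j ≠ i)
    (p : α) : Function.update x i p '' {k | k ≠ j} = insert p (x '' {k | k ≠ i ∧ k ≠ j}) := by
  ext y
  constructor
  · rintro ⟨k, hkj, rfl⟩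
    rcases eq_or_ne k i with rfl | hki
    · simp
    · exact mem_insert_of_mem _ ⟨k, ⟨hki, hkj⟩, (Function.update_of_ne hki p x).symm⟩
  · rintro (rfl | ⟨k, ⟨hki, hkj⟩, rfl⟩)
    · exact ⟨i, hji.symm, Function.update_self _ _ _⟩
    · exact ⟨k, hkj, Function.update_of_ne hki p x⟩

section Height

variable {n m : ℕ}

theorem height_nonneg (x : Fin (m+2) → E n) (j : Fin (m+2)) : 0 ≤ height x j :=
  infDist_nonneg

theorem height_sub_dist_le_height_update_self (x : Fin (m+2) → E n) (i : Fin (m+2)) (p : E n) :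
    height x i - dist (x i) p ≤ height (Function.update x i p) i := by
  have hface : Function.update x i p '' {k | k ≠ i} = x '' {k | k ≠ i} :=
    image_congr fun k hk => Function.update_of_ne hk p x
  rw [height, height, hface, Function.update_self, sub_le_iff_le_add]
  exact infDist_le_infDist_add_dist

theorem min_le_height_update_of_ne {x : Fin (m+2) → E n} {i j : Fin (m+2)} (hji : j ≠ i)
    {p : E n} {h ε D c : ℝ} (hh : ∀ k, h ≤ height x k) (hp : dist (x i) p ≤ ε)
    (hD : ∀ k, dist (x j) (x k) ≤ D) (hc : 1 ≤ c) :
    min (h - c * ε) (c * (h - ε) - D) ≤ height (Function.update x i p) j := by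
  have hface : x '' {k | k ≠ j} = insert (x i) (x '' {k | k ≠ i ∧ k ≠ j}) := by
    simpa using image_update_setOf_ne x hji (x i)
  rw [height, Function.update_of_ne hji, image_update_setOf_ne x hji,
    le_infDist ⟨p, mem_affineSpan ℝ (mem_insert _ _)⟩]
  refine fun y hy => min_le_dist_of_mem_affineSpan_insert (fun y hy => ?_) (fun b hb => ?_) hp
    ?_ hc hy
  · exact (hh j).trans (infDist_le_dist_of_mem (by rwa [hface]))
  · exact (hh i).trans
      (infDist_le_dist_of_mem (affineSpan_mono ℝ (image_mono fun k hk => hk.1) hb))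
  · rintro _ ⟨k, -, rfl⟩
    exact hD k

end Height

/-- Perturbation of voluminous simplices: if `T = conv(x 0,…,x (m+1))` satisfies
`diam T ≤ d` and `h_min(T) ≥ η d` with `η ∈ [0,1]`, `d > 0`, and `‖x 0 − x̄₀‖ ≤ (η²/8) d`,
then the simplex `T̄` obtained by replacing `x 0` with `x̄₀` satisfies `diam T̄ ≤ (9/8) d`
and `h_min(T̄) ≥ (1/2) η d`. -/
theorem perturbed_voluminous_simplex (n m : ℕ) (x : Fin (m+2) → E n) (η d : ℝ)
    (hη : η ∈ Set.Icc (0:ℝ) 1) (hd : 0 < d)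
    (hdiam : Metric.diam (convexHull ℝ (Set.range x)) ≤ d)
    (hmin : η * d ≤ minHeight x)
    (xb : E n) (hxb : ‖x 0 - xb‖ ≤ η ^ 2 / 8 * d) :
    Metric.diam (convexHull ℝ (Set.range (Function.update x 0 xb))) ≤ 9/8 * d ∧
    1/2 * η * d ≤ minHeight (Function.update x 0 xb) := by
  obtain ⟨hη0, hη1⟩ := hη
  rw [convexHull_diam] at hdiam ⊢
  have hε : dist (x 0) xb ≤ η ^ 2 / 8 * d := (dist_eq_norm _ _).trans_le hxb
  have hh : ∀ k, η * d ≤ height x k := fun k => hmin.trans (ciInf_le (Finite.bddBelow_range _) k)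
  have hεη : η ^ 2 / 8 * d ≤ η * d / 8 := by nlinarith [mul_nonneg hη0 hd.le]
  have hηd : η * d ≤ d := by nlinarith
  have hD : ∀ j k, dist (x j) (x k) ≤ d := fun j k =>
    (dist_le_diam_of_mem (finite_range x).isBounded (mem_range_self j) (mem_range_self k)).trans
      hdiam
  refine ⟨(diam_range_update_le x 0 xb).trans (by linarith), le_ciInf fun j => ?_⟩
  rcases hη0.eq_or_lt with rfl | hηpos
  · simpa using height_nonneg _ j
  rcases eq_or_ne j 0 with rfl | hj
  · have := height_sub_dist_le_height_update_self x 0 xb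
    linarith [hh 0, mul_pos hηpos hd]
  refine le_trans (le_min ?_ ?_) (min_le_height_update_of_ne hj hh hε (hD j) (c := 4 / η) ?_)
  · have : 4 / η * (η ^ 2 / 8 * d) = η * d / 2 := by field_simp; ring
    linarith
  · have : 4 / η * (η * d - η ^ 2 / 8 * d) = 4 * d - η * d / 2 := by field_simp; ring
    linarith
  · rw [le_div_iff₀ hηpos]
    linarith
end
end

section
/- Let Σ ⊂ R^n be compact, Ahlfors regular with H^m(Σ ∩ B(x,r)) ≥ A_Σ r^m for all x ∈ Σ and r ≤ diam Σ, and assume the global tangent-point curvature K_tp (with respect to some map H : Σ → G(n,m)) satisfies ∫_Σ K_tp(z)^p dH^m(z) ≤ E for some p > m. Then for all x ∈ Σ and r ∈ (0, diam Σ], β_Σ(x,r) ≤ C (E/A_Σ)^{κ/(p−m)} r^{κ} with κ = (p−m)/(p+m) and an absolute constant C (one may take C = 4). -/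
open MeasureTheory Metric Set
open scoped ENNReal

noncomputable section

/-- The beta number `β_A(x,r)` with respect to `m`-planes. -/
noncomputable def betaNum {n : ℕ} (m : ℕ) (A : Set (E n)) (x : E n) (r : ℝ) : ℝ :=
  r⁻¹ * ⨅ H : {H : Submodule ℝ (E n) // Module.finrank ℝ H = m},
      ⨆ z ∈ A ∩ Metric.ball x r, Metric.infDist z ((fun v => x + v) '' (H.1 : Set (E n)))

/-- The global tangent-point curvature of `A` at `x`, with respect to the plane field `T`:
`K_tp(x) = sup_{y ∈ A} 2 dist(y, x + T x) / |y − x|²` (valued in `[0,∞]`). -/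
noncomputable def Ktp {n : ℕ} (T : E n → Submodule ℝ (E n)) (A : Set (E n)) (x : E n) : ℝ≥0∞ :=
  ⨆ y ∈ A, ENNReal.ofReal
    (2 * Metric.infDist y ((fun v => x + v) '' ((T x) : Set (E n))) / ‖y - x‖ ^ 2)

/-! Chebyshev's inequality and Ahlfors regularity give a point `w ∈ A ∩ B(x, ρ)` with
`K_tp(w) ≤ ρ / r²` as soon as `A_Σ ρ^m (ρ / r²)^p > E`. The tangent-point inequality at `w` puts
`A ∩ B(x, r)` within `K_tp(w) (2r)² / 2 ≤ 2ρ` of `w + H(w)`, hence within `3ρ` of the parallel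
plane through `x`, so `β(x, r) ≤ 3ρ / r`; choosing the balancing `ρ` yields the exponents, with
`C = 3`. When `ρ ≥ r` the trivial bound `β ≤ 1` suffices. -/

lemma infDist_image_add_left {V : Type*} [NormedAddCommGroup V] (s : Set V) (x y : V) :
    infDist y ((fun v => x + v) '' s) = infDist (y - x) s := by
  simpa using infDist_image (x := y - x) (t := s) (isometry_add_left x)

lemma infDist_image_add_left_le {V : Type*} [NormedAddCommGroup V] (s : Set V) (x w z : V) :
    infDist z ((fun v => x + v) '' s) ≤ infDist z ((fun v => w + v) '' s) + dist x w := by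
  rw [infDist_image_add_left, infDist_image_add_left, ← dist_sub_left z x w]
  exact infDist_le_infDist_add_dist

lemma exists_le_of_setLIntegral_lt {α : Type*} [MeasurableSpace α] {μ : Measure α} {s : Set α}
    (hs : MeasurableSet s) {f : α → ℝ≥0∞} {c : ℝ≥0∞} (h : ∫⁻ z in s, f z ∂μ < c * μ s) :
    ∃ z ∈ s, f z ≤ c := by
  by_contra! hlt
  refine h.not_ge ?_
  calc c * μ s = ∫⁻ _ in s, c ∂μ := (setLIntegral_const s c).symm
    _ ≤ ∫⁻ z in s, f z ∂μ := setLIntegral_mono' hs fun z hz => (hlt z hz).le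

lemma self_mem_image_add_left {R V : Type*} [Semiring R] [AddCommMonoid V] [Module R V]
    (H : Submodule R V) (x : V) : x ∈ (fun v => x + v) '' (H : Set V) :=
  ⟨0, H.zero_mem, add_zero x⟩

section BetaNum

variable {n m : ℕ} {A : Set (E n)} {x : E n} {r : ℝ}

lemma betaNum_le_of_forall_infDist_le (hr : 0 < r) (H : Submodule ℝ (E n))
    (hH : Module.finrank ℝ H = m) {d : ℝ} (hd : 0 ≤ d)
    (h : ∀ z ∈ A ∩ ball x r, infDist z ((fun v => x + v) '' (H : Set (E n))) ≤ d) :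
    betaNum m A x r ≤ d / r := by
  have hbdd : BddBelow (range fun H : {H : Submodule ℝ (E n) // Module.finrank ℝ H = m} =>
      ⨆ z ∈ A ∩ ball x r, infDist z ((fun v => x + v) '' (H.1 : Set (E n)))) :=
    ⟨0, by
      rintro _ ⟨H, rfl⟩
      exact Real.iSup_nonneg fun z => Real.iSup_nonneg fun _ => infDist_nonneg⟩
  rw [betaNum, inv_mul_eq_div]
  gcongr
  exact (ciInf_le hbdd ⟨H, hH⟩).trans (Real.iSup_le (fun z => Real.iSup_le (h z) hd) hd)

lemma betaNum_le_one (hr : 0 < r) (H : Submodule ℝ (E n)) (hH : Module.finrank ℝ H = m) :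
    betaNum m A x r ≤ 1 := by
  simpa [hr.ne'] using betaNum_le_of_forall_infDist_le hr H hH hr.le fun z hz =>
    (infDist_le_dist_of_mem (self_mem_image_add_left H x)).trans (mem_ball.1 hz.2).le

lemma infDist_le_of_Ktp_le {T : E n → Submodule ℝ (E n)} {w y : E n} {k : ℝ} (hk : 0 ≤ k)
    (hK : Ktp T A w ≤ ENNReal.ofReal k) (hy : y ∈ A) :
    infDist y ((fun v => w + v) '' (T w : Set (E n))) ≤ k * ‖y - w‖ ^ 2 / 2 := by
  rcases eq_or_ne y w with rfl | hyw
  · rw [infDist_zero_of_mem (self_mem_image_add_left (T y) y)]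
    positivity
  have hq : 0 < ‖y - w‖ ^ 2 := by
    have := norm_pos_iff.2 (sub_ne_zero.2 hyw)
    positivity
  have h := (le_iSup₂ (f := fun y (_ : y ∈ A) => ENNReal.ofReal
    (2 * infDist y ((fun v => w + v) '' (T w : Set (E n))) / ‖y - w‖ ^ 2)) y hy).trans hK
  rw [ENNReal.ofReal_le_ofReal_iff hk, div_le_iff₀ hq] at h
  linarith

lemma betaNum_le_of_Ktp_le {T : E n → Submodule ℝ (E n)} {w : E n} {k ρ : ℝ} (hr : 0 < r)
    (hTw : Module.finrank ℝ (T w) = m) (hwx : dist w x ≤ ρ) (hk : 0 ≤ k)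
    (hK : Ktp T A w ≤ ENNReal.ofReal k) :
    betaNum m A x r ≤ (k * (r + ρ) ^ 2 / 2 + ρ) / r := by
  have hρ : 0 ≤ ρ := dist_nonneg.trans hwx
  refine betaNum_le_of_forall_infDist_le hr (T w) hTw (by positivity) fun z hz => ?_
  have hzw : ‖z - w‖ ≤ r + ρ := by
    rw [← dist_eq_norm]
    linarith [dist_triangle z x w, (mem_ball.1 hz.2).le, dist_comm w x]
  calc infDist z ((fun v => x + v) '' (T w : Set (E n)))
      ≤ infDist z ((fun v => w + v) '' (T w : Set (E n))) + dist x w :=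
        infDist_image_add_left_le _ x w z
    _ ≤ k * ‖z - w‖ ^ 2 / 2 + ρ := by
        linarith [infDist_le_of_Ktp_le hk hK hz.1, dist_comm w x]
    _ ≤ k * (r + ρ) ^ 2 / 2 + ρ := by gcongr

end BetaNum

/-- The radius `ρ` at which the Ahlfors lower bound `Q ρ^m` on the measure of `A ∩ ball x ρ`
balances the curvature bound `(ρ / r²)^p` needed to control `β(x, r)` by `ρ / r`:
`ρ^m (ρ / r²)^p = Q`. -/
def balancedRadius (Q r p : ℝ) (m : ℕ) : ℝ := Q ^ (1 / (p + m)) * r ^ (2 * p / (p + m))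

section BalancedRadius

variable {Q r p : ℝ} {m : ℕ}

lemma balancedRadius_pos (hQ : 0 < Q) (hr : 0 < r) : 0 < balancedRadius Q r p m := by
  unfold balancedRadius
  positivity

lemma balancedRadius_pow_mul_div_sq_rpow (hQ : 0 < Q) (hr : 0 < r) (hpm : 0 < p + m) :
    balancedRadius Q r p m ^ m * (balancedRadius Q r p m / r ^ 2) ^ p = Q := by
  have hρ := balancedRadius_pos (p := p) (m := m) hQ hr
  have hρ_rpow : balancedRadius Q r p m ^ (p + m) = Q * r ^ (2 * p) := by
    rw [balancedRadius, Real.mul_rpow (by positivity) (by positivity), ← Real.rpow_mul hQ.le,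
      ← Real.rpow_mul hr.le, one_div_mul_cancel hpm.ne', div_mul_cancel₀ _ hpm.ne',
      Real.rpow_one]
  rw [Real.div_rpow hρ.le (by positivity), ← Real.rpow_natCast, mul_div_assoc',
    ← Real.rpow_add hρ, add_comm, hρ_rpow, ← Real.rpow_natCast r 2, ← Real.rpow_mul hr.le,
    Nat.cast_ofNat, mul_div_cancel_right₀ _ (Real.rpow_pos_of_pos hr _).ne']

lemma balancedRadius_div (hr : 0 < r) (hpm : 0 < p + m) :
    balancedRadius Q r p m / r = Q ^ (1 / (p + m)) * r ^ ((p - m) / (p + m)) := by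
  have hexp : (p - m) / (p + m) = 2 * p / (p + m) - 1 := by
    field_simp
    ring
  rw [balancedRadius, hexp, Real.rpow_sub hr, Real.rpow_one, mul_div_assoc]

end BalancedRadius

/-- The strict energy bound is what makes the Chebyshev argument find a point of small
curvature in `A ∩ ball x ρ`. -/
lemma betaNum_le_of_lintegral_Ktp_lt {n m : ℕ} {p Areg E' : ℝ} {A : Set (E n)}
    {T : E n → Submodule ℝ (E n)} (hA : IsCompact A) (hm : (m : ℝ) < p) (hAreg : 0 < Areg)
    (hE' : 0 < E') (hT : ∀ x ∈ A, Module.finrank ℝ (T x) = m)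
    (hreg : ∀ x ∈ A, ∀ r : ℝ, 0 < r → r ≤ diam A →
      ENNReal.ofReal (Areg * r ^ m) ≤ μH[(m:ℝ)] (A ∩ ball x r))
    (hint : ∫⁻ z in A, Ktp T A z ^ p ∂μH[(m:ℝ)] < ENNReal.ofReal E')
    {x : E n} (hx : x ∈ A) {r : ℝ} (hr : 0 < r) (hrd : r ≤ diam A) :
    betaNum m A x r ≤ 3 * (E' / Areg) ^ (1 / (p + m)) * r ^ ((p - m) / (p + m)) := by
  have hp : 0 < p := (Nat.cast_nonneg m).trans_lt hm
  have hpm : 0 < p + m := by positivity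
  have hQ : 0 < E' / Areg := div_pos hE' hAreg
  set ρ := balancedRadius (E' / Areg) r p m
  have hρ : 0 < ρ := balancedRadius_pos hQ hr
  rw [mul_assoc, ← balancedRadius_div hr hpm]
  rcases le_or_gt r ρ with hrρ | hρr
  · calc betaNum m A x r ≤ 1 := betaNum_le_one hr (T x) (hT x hx)
      _ ≤ 3 * (ρ / r) := by linarith [(one_le_div hr).2 hrρ]
  set k := ρ / r ^ 2
  have hk : 0 ≤ k := by positivity
  obtain ⟨w, hw, hKw⟩ : ∃ w ∈ A ∩ ball x ρ, Ktp T A w ^ p ≤ ENNReal.ofReal (k ^ p) := by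
    refine exists_le_of_setLIntegral_lt (μ := μH[(m:ℝ)])
      (hA.isClosed.measurableSet.inter measurableSet_ball) ?_
    calc ∫⁻ z in A ∩ ball x ρ, Ktp T A z ^ p ∂μH[(m:ℝ)]
        ≤ ∫⁻ z in A, Ktp T A z ^ p ∂μH[(m:ℝ)] := lintegral_mono_set inter_subset_left
      _ < ENNReal.ofReal E' := hint
      _ = ENNReal.ofReal (k ^ p) * ENNReal.ofReal (Areg * ρ ^ m) := by
        rw [← ENNReal.ofReal_mul (by positivity), mul_left_comm, mul_comm (k ^ p),
          balancedRadius_pow_mul_div_sq_rpow hQ hr hpm, mul_div_cancel₀ _ hAreg.ne']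
      _ ≤ ENNReal.ofReal (k ^ p) * μH[(m:ℝ)] (A ∩ ball x ρ) :=
        mul_le_mul_right (hreg x hx ρ hρ (hρr.le.trans hrd)) _
  have hKw' : Ktp T A w ≤ ENNReal.ofReal k := by
    rwa [← ENNReal.ofReal_rpow_of_nonneg hk hp.le,
      ENNReal.rpow_le_rpow_iff hp] at hKw
  calc betaNum m A x r ≤ (k * (r + ρ) ^ 2 / 2 + ρ) / r :=
        betaNum_le_of_Ktp_le hr (hT w hw.1) (mem_ball.1 hw.2).le hk hKw'
    _ ≤ (k * (2 * r) ^ 2 / 2 + ρ) / r := by gcongr; linarith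
    _ = 3 * (ρ / r) := by
        simp only [k]
        field_simp
        ring

/-- Decay of beta numbers from `p`-integrable global tangent-point curvature: there is an
absolute constant `C` such that for every compact Ahlfors regular set `A ⊂ ℝⁿ` (with
constant `A_Σ`) whose global tangent-point curvature (w.r.t. some plane field `T`)
satisfies `∫_A K_tp^p dH^m ≤ E₀` for some `p > m`, one has
`β_A(x,r) ≤ C (E₀/A_Σ)^{κ/(p−m)} r^κ` with `κ = (p−m)/(p+m)`,
for all `x ∈ A` and `r ∈ (0, diam A]`. -/
theorem beta_decay_tangent_point :
    ∃ C : ℝ, 0 < C ∧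
      ∀ (n m : ℕ) (p Areg E₀ : ℝ) (A : Set (E n)) (T : E n → Submodule ℝ (E n)),
        IsCompact A → (m : ℝ) < p → 0 < Areg → 0 ≤ E₀ →
        (∀ x ∈ A, Module.finrank ℝ (T x) = m) →
        (∀ x ∈ A, ∀ r : ℝ, 0 < r → r ≤ Metric.diam A →
          ENNReal.ofReal (Areg * r ^ m) ≤ μH[(m:ℝ)] (A ∩ Metric.ball x r)) →
        (∫⁻ z in A, (Ktp T A z) ^ p ∂μH[(m:ℝ)]) ≤ ENNReal.ofReal E₀ →
        ∀ x ∈ A, ∀ r : ℝ, 0 < r → r ≤ Metric.diam A →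
          betaNum m A x r ≤
            C * (E₀ / Areg) ^ (((p - m) / (p + m)) / (p - m)) * r ^ ((p - m) / (p + m)) := by
  refine ⟨3, three_pos, fun n m p Areg E₀ A T hA hm hAreg hE₀ hT hreg hint x hx r hr hrd => ?_⟩
  have hpm : 0 < p + m := by linarith [(Nat.cast_nonneg m : (0 : ℝ) ≤ m)]
  have hexp : ((p - m) / (p + m)) / (p - m) = 1 / (p + m) := by
    field_simp [(sub_pos.2 hm).ne']
  rw [hexp]
  -- let the strict energy bound `E'` decrease to `E₀`
  have hcont : ContinuousAt (fun e => 3 * (e / Areg) ^ (1 / (p + m)) * r ^ ((p - m) / (p + m)))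
      E₀ := by
    fun_prop (disch := positivity)
  refine ge_of_tendsto (hcont.tendsto.mono_left (nhdsWithin_le_nhds (s := Ioi E₀)))
    (eventually_nhdsWithin_of_forall fun e (he : E₀ < e) => ?_)
  exact betaNum_le_of_lintegral_Ktp_lt hA hm hAreg (hE₀.trans_lt he) hT hreg
    (hint.trans_lt ((ENNReal.ofReal_lt_ofReal_iff (hE₀.trans_lt he)).2 he)) hx hr hrd

end
end
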